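/- arXiv:2412.16535 — 2 statements merged into one kernel-verified Lean document; each statement's English description precedes it below -/
import Mathlib

section
/- Let S* = {x : G(x) = 0}, let x̄ ∈ S*, and suppose ∇f is L_H-Lipschitz on ℝⁿ and ∇²f is L_C-Lipschitz on B(x̄, ε₀). Let x_k ∈ B(x̄, ε₀/2), let H_k = ∇²f(x_k) + ([−λ_min(∇²f(x_k))]₊ + c + μ₁·min{1, ‖G(x_k)‖^δ})·I, and let x̂_k minimize x ↦ f(x_k) + ⟨∇f(x_k), x − x_k⟩ + g(x) + (1/2)⟨x − x_k, H_k(x − x_k)⟩ + ⟨ε_k, x − x_k⟩ with ‖ε_k‖ ≤ (μ₂/2)·min{1, ‖G(x_k)‖^δ}·‖x̂_k − x_k‖, where c > μ₂(1 + 2L_H + μ₁)/(2 − μ₂), μ₁ ∈ (0,1], μ₂ ∈ (0, μ₁], δ ∈ [0,1]. Then with η̃̃ = 2c − μ₂(c + 1 + μ₁ + 2L_H) > 0, ‖x̂_k − x_k‖ ≤ (L_C/η̃̃)·dist(x_k, S*)² + (2(L_H + 2c + μ₁)/η̃̃)·dist(x_k, S*). -/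
/-!
For `x* ∈ S*` the fixed-point equation `x* = prox_g (x* - ∇f x*)` says `-∇f x* ∈ ∂g x*`, and
optimality of `x̂` for the model says `-(∇f x_k + ε_k + H_k (x̂ - x_k)) ∈ ∂g x̂`. Adding the two
subgradient inequalities and using `H_k ⪰ (c + μ₁ m) I`, with `m = min 1 ‖G x_k‖^δ`, gives
`(c + μ₁ m) ‖x̂ - x*‖ ≤ ‖∇f x* - ∇f x_k - ∇²f x_k (x* - x_k)‖ + ‖ε_k‖ + (L_H + c + μ₁ m) ‖x* - x_k‖`.
The first term is at most `L_C/2 ‖x* - x_k‖²` by Lipschitz continuity of the Hessian; the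
triangle inequality `‖x̂ - x_k‖ ≤ ‖x̂ - x*‖ + ‖x* - x_k‖` and the bound on `ε_k` then give the
estimate with `‖x* - x_k‖` in place of `dist(x_k, S*)`, uniformly in `m ∈ [0, 1]`. Letting `x*`
approach the infimum finishes the proof.
-/

open scoped RealInnerProductSpace
open Set Filter Topology

section InnerProductSpace

variable {E : Type*} [NormedAddCommGroup E] [InnerProductSpace ℝ E]

theorem ConvexOn.le_add_of_isMinOn_add {g q : E → ℝ} {q' : E →L[ℝ] ℝ} {s : Set E} {x₀ y : E}
    (hg : ConvexOn ℝ s g) (hx₀ : x₀ ∈ s) (hy : y ∈ s) (hq : HasFDerivAt q q' x₀)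
    (hmin : IsMinOn (fun x => g x + q x) s x₀) :
    g x₀ ≤ g y + q' (y - x₀) := by
  have hslope := (hq.hasLineDerivAt (y - x₀)).tendsto_slope_zero_right
  suffices ∀ t ∈ Ioo (0 : ℝ) 1, g x₀ - g y ≤ t⁻¹ • (q (x₀ + t • (y - x₀)) - q x₀) by
    linarith [ge_of_tendsto hslope (eventually_of_mem (Ioo_mem_nhdsGT one_pos) this)]
  rintro t ⟨ht0, ht1⟩
  have hseg : x₀ + t • (y - x₀) = (1 - t) • x₀ + t • y := by
    rw [smul_sub, sub_smul, one_smul]; abel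
  have ht : (0 : ℝ) ≤ 1 - t := by linarith
  have hconv := hg.2 hx₀ hy ht ht0.le (sub_add_cancel 1 t)
  have hle := isMinOn_iff.mp hmin _ (hg.1 hx₀ hy ht ht0.le (sub_add_cancel 1 t))
  rw [smul_eq_mul, le_inv_mul_iff₀ ht0]
  simp only [smul_eq_mul] at hconv
  rw [← hseg] at hconv hle
  nlinarith

theorem ConvexOn.le_add_inner_of_isMinOn_prox {g : E → ℝ} {z p : E}
    (hg : ConvexOn ℝ univ g) (hmin : IsMinOn (fun u => g u + (1 / 2) * ‖u - z‖ ^ 2) univ p)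
    (y : E) : g p ≤ g y + ⟪p - z, y - p⟫ := by
  have hq := (((hasFDerivAt_id p).sub_const z).norm_sq).const_mul (1 / 2 : ℝ)
  convert hg.le_add_of_isMinOn_add (mem_univ p) (mem_univ y) hq hmin using 2
  simp [inner_sub_left]

theorem hasFDerivAt_half_inner_sub_apply {H : E →L[ℝ] E} (hH : (H : E →ₗ[ℝ] E).IsSymmetric)
    (a x : E) :
    HasFDerivAt (fun y => (1 / 2) * ⟪y - a, H (y - a)⟫) (innerSL ℝ (H (x - a))) x := by
  have hsub : HasFDerivAt (fun y : E => y - a) (ContinuousLinearMap.id ℝ E) x :=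
    (hasFDerivAt_id x).sub_const a
  refine ((hsub.inner ℝ (H.hasFDerivAt.comp x hsub)).const_mul (1 / 2 : ℝ)).congr_fderiv ?_
  ext v
  simp only [smul_apply, ContinuousLinearMap.comp_apply,
    ContinuousLinearMap.prod_apply, fderivInnerCLM_apply, innerSL_apply_apply,
    ContinuousLinearMap.id_apply, Function.comp_apply, smul_eq_mul]
  rw [← hH.apply_clm, real_inner_comm v]
  ring

theorem ConvexOn.le_add_inner_of_isMinOn_model {g : E → ℝ} {H : E →L[ℝ] E} {c : ℝ} {a b ε x : E}
    (hg : ConvexOn ℝ univ g) (hH : (H : E →ₗ[ℝ] E).IsSymmetric)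
    (hmin : IsMinOn (fun y => c + ⟪b, y - a⟫ + g y + (1 / 2) * ⟪y - a, H (y - a)⟫ + ⟪ε, y - a⟫)
      univ x)
    (y : E) : g x ≤ g y + ⟪b + ε + H (x - a), y - x⟫ := by
  set q : E → ℝ := fun y => c + ⟪b + ε, y - a⟫ + (1 / 2) * ⟪y - a, H (y - a)⟫
  have hq : HasFDerivAt q (innerSL ℝ (b + ε) + innerSL ℝ (H (x - a))) x :=
    ((((innerSL ℝ (b + ε)).hasFDerivAt.comp x ((hasFDerivAt_id x).sub_const a)).const_add c).add
      (hasFDerivAt_half_inner_sub_apply hH a x)).congr_fderiv (by ext; simp)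
  have hmin' : IsMinOn (fun y => g y + q y) univ x := by
    convert hmin using 2 with y
    simp only [q, inner_add_left]
    ring
  convert hg.le_add_of_isMinOn_add (mem_univ x) (mem_univ y) hq hmin' using 2
  simp only [add_apply, innerSL_apply_apply, inner_add_left]

theorem mul_norm_sub_le_of_le_add_inner {g : E → ℝ} {H : E →L[ℝ] E} {κ : ℝ} {x y a w b : E}
    (hx : g x ≤ g y + ⟪w + H (x - a), y - x⟫) (hy : g y ≤ g x + ⟪b, x - y⟫)
    (hcoer : κ * ‖x - y‖ ^ 2 ≤ ⟪x - y, H (x - y)⟫) :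
    κ * ‖x - y‖ ≤ ‖b - w - H (y - a)‖ := by
  set u := x - y
  have hsum : ⟪u, H u⟫ ≤ ⟪b - w - H (y - a), u⟫ := by
    have hxa : x - a = u + (y - a) := by simp only [u]; abel
    have hyx : y - x = -u := by simp only [u]; abel
    rw [hxa, map_add, hyx, inner_neg_right] at hx
    simp only [inner_sub_left, inner_add_left] at hx ⊢
    rw [← real_inner_comm (H u) u] at hx
    linarith
  have hle : κ * ‖u‖ ^ 2 ≤ ‖b - w - H (y - a)‖ * ‖u‖ :=
    hcoer.trans (hsum.trans (real_inner_le_norm _ _))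
  rcases (norm_nonneg u).eq_or_lt with hu | hu
  · rw [← hu, mul_zero]; exact norm_nonneg _
  · nlinarith

theorem mul_norm_sq_le_inner_add_smul_id {A : E →L[ℝ] E} {lam t : ℝ} {v : E}
    (hA : lam * ‖v‖ ^ 2 ≤ ⟪v, A v⟫) :
    t * ‖v‖ ^ 2 ≤ ⟪v, (A + (max (-lam) 0 + t) • ContinuousLinearMap.id ℝ E) v⟫ := by
  rw [add_apply, smul_apply, ContinuousLinearMap.id_apply, inner_add_right,
    real_inner_smul_right, real_inner_self_eq_norm_sq]
  nlinarith [le_max_left (-lam) 0, sq_nonneg ‖v‖]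

theorem neg_mul_norm_sq_le_inner_apply {T : E →L[ℝ] E} {C : ℝ} (hT : ‖T‖ ≤ C) (v : E) :
    -C * ‖v‖ ^ 2 ≤ ⟪v, T v⟫ := by
  have hTv : ‖T v‖ ≤ C * ‖v‖ := (T.le_opNorm v).trans (by gcongr)
  nlinarith [neg_abs_le ⟪v, T v⟫, abs_real_inner_le_norm v (T v), norm_nonneg v]

end InnerProductSpace

theorem isSymmetric_of_hasFDerivAt_gradient {E : Type*} [NormedAddCommGroup E]
    [InnerProductSpace ℝ E] [CompleteSpace E] {f : E → ℝ} {H : E →L[ℝ] E} {x : E}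
    (hf : Differentiable ℝ f) (hH : HasFDerivAt (gradient f) H x) :
    (H : E →ₗ[ℝ] E).IsSymmetric := by
  set T := (InnerProductSpace.toDual ℝ E).toContinuousLinearEquiv.toContinuousLinearMap
  have hf' : ∀ y, HasFDerivAt f (T (gradient f y)) y := fun y =>
    hasGradientAt_iff_hasFDerivAt.mp (hf y).hasGradientAt
  intro v w
  have := second_derivative_symmetric hf' (T.hasFDerivAt.comp x hH) w v
  simp only [ContinuousLinearMap.comp_apply, T] at this
  simpa [InnerProductSpace.toDual_apply_apply, real_inner_comm] using this.symm

theorem Convex.norm_image_sub_sub_fderiv_le_of_lipschitz {E F : Type*} [NormedAddCommGroup E]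
    [NormedSpace ℝ E] [NormedAddCommGroup F] [NormedSpace ℝ F] {φ : E → F}
    {φ' : E → E →L[ℝ] F} {s : Set E} {L : ℝ} {x y : E} (hs : Convex ℝ s)
    (hφ : ∀ z ∈ s, HasFDerivAt φ (φ' z) z)
    (hlip : ∀ u ∈ s, ∀ v ∈ s, ‖φ' u - φ' v‖ ≤ L * ‖u - v‖) (hx : x ∈ s) (hy : y ∈ s) :
    ‖φ y - φ x - φ' x (y - x)‖ ≤ L / 2 * ‖y - x‖ ^ 2 := by
  set e := y - x
  have hseg : ∀ t ∈ Icc (0 : ℝ) 1, x + t • e ∈ s := fun t ht =>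
    hs.add_smul_sub_mem hx hy ht
  have hψ : ∀ t ∈ Icc (0 : ℝ) 1, HasDerivAt (fun t : ℝ => φ (x + t • e) - φ x - t • φ' x e)
      (φ' (x + t • e) e - φ' x e) t := by
    intro t ht
    have hline : HasDerivAt (fun t : ℝ => x + t • e) e t := by
      simpa using ((hasDerivAt_id t).smul_const e).const_add x
    exact (((hφ _ (hseg t ht)).comp_hasDerivAt t hline).sub_const (φ x)).sub
      (by simpa using (hasDerivAt_id t).smul_const (φ' x e))
  have hbound : ∀ t ∈ Ico (0 : ℝ) 1, ‖φ' (x + t • e) e - φ' x e‖ ≤ L * ‖e‖ ^ 2 * t := by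
    intro t ht
    have hts := hseg t (Ico_subset_Icc_self ht)
    calc ‖φ' (x + t • e) e - φ' x e‖ = ‖(φ' (x + t • e) - φ' x) e‖ := rfl
      _ ≤ ‖φ' (x + t • e) - φ' x‖ * ‖e‖ := ContinuousLinearMap.le_opNorm _ _
      _ ≤ L * ‖x + t • e - x‖ * ‖e‖ := by gcongr; exact hlip _ hts _ hx
      _ = L * ‖e‖ ^ 2 * t := by
        rw [add_sub_cancel_left, norm_smul, Real.norm_of_nonneg ht.1]; ring
  have hB : ∀ t, HasDerivAt (fun t : ℝ => L / 2 * ‖e‖ ^ 2 * t ^ 2) (L * ‖e‖ ^ 2 * t) t := by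
    intro t
    exact ((hasDerivAt_pow 2 t).const_mul (L / 2 * ‖e‖ ^ 2)).congr_deriv (by push_cast; ring)
  have := image_norm_le_of_norm_deriv_right_le_deriv_boundary
    (fun t ht => (hψ t ht).continuousAt.continuousWithinAt)
    (fun t ht => (hψ t (Ico_subset_Icc_self ht)).hasDerivWithinAt) (by simp) hB hbound
    (right_mem_Icc.mpr zero_le_one)
  simpa [e] using this

theorem le_of_weighted_step_le {LH LC c μ₁ μ₂ m D ρ : ℝ} (hLH : 0 ≤ LH) (hLC : 0 ≤ LC)
    (hμ₁ : μ₁ ≤ 1) (hμ₂ : 0 < μ₂) (hμ₂μ₁ : μ₂ ≤ μ₁) (hm₀ : 0 ≤ m) (hm₁ : m ≤ 1) (hρ : 0 ≤ ρ)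
    (hη : 0 < 2 * c - μ₂ * (c + 1 + μ₁ + 2 * LH))
    (hD : (c + μ₁ * m - μ₂ / 2 * m) * D ≤ LC / 2 * ρ ^ 2 + (LH + 2 * c + 2 * μ₁ * m) * ρ) :
    D ≤ LC / (2 * c - μ₂ * (c + 1 + μ₁ + 2 * LH)) * ρ ^ 2
      + 2 * (LH + 2 * c + μ₁) / (2 * c - μ₂ * (c + 1 + μ₁ + 2 * LH)) * ρ := by
  have hc : 0 < c := by nlinarith
  have hQ : 0 ≤ c + 1 + μ₁ + 2 * LH := by linarith
  have hηP : 2 * c - μ₂ * (c + 1 + μ₁ + 2 * LH) ≤ LH + 2 * c + μ₁ := by nlinarith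
  have hηκ : 2 * c - μ₂ * (c + 1 + μ₁ + 2 * LH) ≤ 2 * (c + μ₁ * m - μ₂ / 2 * m) := by
    nlinarith [mul_nonneg (sub_nonneg.2 hμ₂μ₁) hm₀, mul_nonneg hμ₂.le hm₀]
  have hκ : 0 < c + μ₁ * m - μ₂ / 2 * m := by linarith
  have hcoef : (2 * c - μ₂ * (c + 1 + μ₁ + 2 * LH)) * (LH + 2 * c + 2 * μ₁ * m)
      ≤ 2 * (c + μ₁ * m - μ₂ / 2 * m) * (LH + 2 * c + μ₁) := by
    nlinarith [mul_nonneg (mul_nonneg (hμ₂.le.trans hμ₂μ₁) hη.le) (sub_nonneg.2 hm₁),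
      mul_nonneg (mul_nonneg (hμ₂.le.trans hμ₂μ₁) (sub_nonneg.2 hηP)) hm₀,
      mul_nonneg (mul_nonneg (sub_nonneg.2 hμ₂μ₁) hm₀) (hη.le.trans hηP),
      mul_nonneg hμ₂.le (mul_nonneg hQ (hη.le.trans hηP))]
  rw [div_mul_eq_mul_div, div_mul_eq_mul_div, ← add_div, le_div_iff₀ hη]
  refine le_of_mul_le_mul_left ?_ hκ
  nlinarith [mul_le_mul_of_nonneg_left hD hη.le, mul_le_mul_of_nonneg_right hcoef hρ,
    mul_le_mul_of_nonneg_right hηκ (mul_nonneg hLC (sq_nonneg ρ))]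

theorem norm_sub_le_of_isMinOn_model {E : Type*} [NormedAddCommGroup E] [InnerProductSpace ℝ E]
    {g : E → ℝ} {A H : E →L[ℝ] E} {lam LH LC c μ₁ μ₂ m f₀ : ℝ} {xk xhat xs b₁ b₂ ε : E}
    (hg : ConvexOn ℝ univ g) (hA : (A : E →ₗ[ℝ] E).IsSymmetric)
    (hlam : IsGreatest {t : ℝ | ∀ v, t * ‖v‖ ^ 2 ≤ ⟪v, A v⟫} lam) (hALH : ‖A‖ ≤ LH)
    (hLH : 0 ≤ LH) (hLC : 0 ≤ LC)
    (hμ₁ : μ₁ ≤ 1) (hμ₂ : 0 < μ₂) (hμ₂μ₁ : μ₂ ≤ μ₁) (hm₀ : 0 ≤ m) (hm₁ : m ≤ 1)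
    (hη : 0 < 2 * c - μ₂ * (c + 1 + μ₁ + 2 * LH))
    (hH : H = A + (max (-lam) 0 + c + μ₁ * m) • ContinuousLinearMap.id ℝ E)
    (hxs : IsMinOn (fun u => g u + (1 / 2) * ‖u - (xs - b₂)‖ ^ 2) univ xs)
    (hmin : IsMinOn (fun y => f₀ + ⟪b₁, y - xk⟫ + g y
        + (1 / 2) * ⟪y - xk, H (y - xk)⟫ + ⟪ε, y - xk⟫) univ xhat)
    (hR : ‖b₂ - b₁ - A (xs - xk)‖ ≤ LC / 2 * ‖xs - xk‖ ^ 2)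
    (herr : ‖ε‖ ≤ μ₂ / 2 * m * ‖xhat - xk‖) :
    ‖xhat - xk‖ ≤ LC / (2 * c - μ₂ * (c + 1 + μ₁ + 2 * LH)) * ‖xs - xk‖ ^ 2
      + 2 * (LH + 2 * c + μ₁) / (2 * c - μ₂ * (c + 1 + μ₁ + 2 * LH)) * ‖xs - xk‖ := by
  set s := max (-lam) 0 + c + μ₁ * m
  have hlamLH : -LH ≤ lam := hlam.2 (neg_mul_norm_sq_le_inner_apply hALH)
  have hc : 0 < c := by nlinarith
  have hκ : 0 ≤ c + μ₁ * m := by nlinarith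
  have hs : 0 ≤ s := by simp only [s]; linarith [le_max_right (-lam) 0]
  have hsLH : s ≤ LH + c + μ₁ * m := by
    have : max (-lam) 0 ≤ LH := max_le (by linarith) hLH
    linarith
  have hHsymm : (H : E →ₗ[ℝ] E).IsSymmetric := by
    subst hH
    simpa using hA.add (LinearMap.IsSymmetric.id.smul (conj_trivial s))
  have hcoer : (c + μ₁ * m) * ‖xhat - xs‖ ^ 2 ≤ ⟪xhat - xs, H (xhat - xs)⟫ := by
    have := mul_norm_sq_le_inner_add_smul_id (t := c + μ₁ * m) (hlam.1 (xhat - xs))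
    rwa [← add_assoc, ← hH] at this
  have hstat := hg.le_add_inner_of_isMinOn_prox hxs xhat
  rw [sub_sub_cancel] at hstat
  have hstep := mul_norm_sub_le_of_le_add_inner
    (hg.le_add_inner_of_isMinOn_model hHsymm hmin xs) hstat hcoer
  have hres : b₂ - (b₁ + ε) - H (xs - xk) = (b₂ - b₁ - A (xs - xk)) - ε - s • (xs - xk) := by
    rw [hH]; simp only [add_apply, smul_apply, ContinuousLinearMap.id_apply]; abel
  have hnorm : ‖b₂ - (b₁ + ε) - H (xs - xk)‖ ≤ LC / 2 * ‖xs - xk‖ ^ 2 + ‖ε‖ + s * ‖xs - xk‖ := by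
    rw [hres]
    refine (norm_sub_le _ _).trans ?_
    rw [norm_smul, Real.norm_of_nonneg hs]
    linarith [norm_sub_le (b₂ - b₁ - A (xs - xk)) ε]
  have htri : ‖xhat - xk‖ ≤ ‖xhat - xs‖ + ‖xs - xk‖ := norm_sub_le_norm_sub_add_norm_sub _ _ _
  refine le_of_weighted_step_le hLH hLC hμ₁ hμ₂ hμ₂μ₁ hm₀ hm₁ (norm_nonneg _) hη ?_
  nlinarith [mul_le_mul_of_nonneg_left htri hκ,
    mul_le_mul_of_nonneg_right hsLH (norm_nonneg (xs - xk))]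

theorem le_comp_infDist_of_forall_mem {α : Type*} [PseudoMetricSpace α] {S : Set α} {x : α}
    {A R : ℝ} {φ : ℝ → ℝ} (hS : S.Nonempty) (hR : Metric.infDist x S < R) (hφ : Continuous φ)
    (hmono : MonotoneOn φ (Ici 0)) (h : ∀ y ∈ S, dist x y < R → A ≤ φ (dist x y)) :
    A ≤ φ (Metric.infDist x S) := by
  refine ge_of_tendsto (x := 𝓝[>] Metric.infDist x S)
    ((hφ.tendsto _).mono_left nhdsWithin_le_nhds) ?_
  filter_upwards [Ioo_mem_nhdsGT hR] with r hr
  obtain ⟨y, hy, hxy⟩ := (Metric.infDist_lt_iff hS).1 hr.1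
  exact (h y hy (hxy.trans hr.2)).trans
    (hmono dist_nonneg (Metric.infDist_nonneg.trans hr.1.le) hxy.le)

theorem monotoneOn_quadratic {a b : ℝ} (ha : 0 ≤ a) (hb : 0 ≤ b) :
    MonotoneOn (fun r : ℝ => a * r ^ 2 + b * r) (Ici 0) := fun _ hr _ _ hrr' =>
  add_le_add (mul_le_mul_of_nonneg_left (pow_le_pow_left₀ hr hrr' 2) ha)
    (mul_le_mul_of_nonneg_left hrr' hb)

theorem stmt12_general {n : ℕ}
    (f g : EuclideanSpace ℝ (Fin n) → ℝ)
    (hf : ContDiff ℝ 2 f)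
    (LH : ℝ) (hLH : 0 < LH)
    (hlip : ∀ u v, ‖gradient f u - gradient f v‖ ≤ LH * ‖u - v‖)
    (hg : ConvexOn ℝ Set.univ g)
    (proxg : EuclideanSpace ℝ (Fin n) → EuclideanSpace ℝ (Fin n))
    (hprox : ∀ y, IsMinOn (fun u => g u + (1 / 2) * ‖u - y‖ ^ 2) Set.univ (proxg y))
    (G : EuclideanSpace ℝ (Fin n) → EuclideanSpace ℝ (Fin n))
    (hG : ∀ y, G y = y - proxg (y - gradient f y))
    (Hess : EuclideanSpace ℝ (Fin n) → (EuclideanSpace ℝ (Fin n) →L[ℝ] EuclideanSpace ℝ (Fin n)))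
    (hHess : ∀ y, HasFDerivAt (gradient f) (Hess y) y)
    (xbar : EuclideanSpace ℝ (Fin n)) (hxbar : G xbar = 0)
    (ε₀ LC : ℝ) (hLC : 0 ≤ LC)
    (hLipC : ∀ u ∈ Metric.ball xbar ε₀, ∀ v ∈ Metric.ball xbar ε₀,
        ‖Hess u - Hess v‖ ≤ LC * ‖u - v‖)
    (xk : EuclideanSpace ℝ (Fin n)) (hxk : xk ∈ Metric.ball xbar (ε₀ / 2))
    (c μ₁ μ₂ δ : ℝ)
    (hμ₁ : μ₁ ∈ Set.Ioc (0 : ℝ) 1) (hμ₂ : μ₂ ∈ Set.Ioc (0 : ℝ) μ₁)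
    (hc : c > μ₂ * (1 + 2 * LH + μ₁) / (2 - μ₂))
    (lam : ℝ) (hlam : IsGreatest {t : ℝ | ∀ v, t * ‖v‖ ^ 2 ≤ ⟪v, Hess xk v⟫} lam)
    (H : EuclideanSpace ℝ (Fin n) →L[ℝ] EuclideanSpace ℝ (Fin n))
    (hH : H = Hess xk + (max (-lam) 0 + c + μ₁ * min 1 (‖G xk‖ ^ δ))
        • ContinuousLinearMap.id ℝ (EuclideanSpace ℝ (Fin n)))
    (εk xhat : EuclideanSpace ℝ (Fin n))
    (hmin : IsMinOn (fun y => f xk + ⟪gradient f xk, y - xk⟫ + g y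
        + (1 / 2) * ⟪y - xk, H (y - xk)⟫ + ⟪εk, y - xk⟫) Set.univ xhat)
    (herr : ‖εk‖ ≤ (μ₂ / 2) * min 1 (‖G xk‖ ^ δ) * ‖xhat - xk‖) :
    0 < 2 * c - μ₂ * (c + 1 + μ₁ + 2 * LH) ∧
    ‖xhat - xk‖ ≤ (LC / (2 * c - μ₂ * (c + 1 + μ₁ + 2 * LH)))
          * Metric.infDist xk {y : EuclideanSpace ℝ (Fin n) | G y = 0} ^ 2
      + (2 * (LH + 2 * c + μ₁) / (2 * c - μ₂ * (c + 1 + μ₁ + 2 * LH)))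
          * Metric.infDist xk {y : EuclideanSpace ℝ (Fin n) | G y = 0} := by
  obtain ⟨-, hμ₁⟩ := hμ₁
  obtain ⟨hμ₂, hμ₂μ₁⟩ := hμ₂
  have hη : 0 < 2 * c - μ₂ * (c + 1 + μ₁ + 2 * LH) := by
    rw [gt_iff_lt, div_lt_iff₀ (by linarith)] at hc
    linarith
  refine ⟨hη, ?_⟩
  have hxk' : dist xk xbar < ε₀ / 2 := Metric.mem_ball.mp hxk
  have hS : xbar ∈ {y | G y = 0} := hxbar
  refine le_comp_infDist_of_forall_mem ⟨xbar, hS⟩ ((Metric.infDist_le_dist_of_mem hS).trans_lt hxk')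
    (by fun_prop) (monotoneOn_quadratic (div_nonneg hLC hη.le) (div_nonneg (by nlinarith) hη.le))
    fun xs hxs hdist => ?_
  rw [dist_comm, dist_eq_norm]
  have hfix : IsMinOn (fun u => g u + (1 / 2) * ‖u - (xs - gradient f xs)‖ ^ 2) univ xs := by
    rw [mem_ofPred_eq, hG, sub_eq_zero] at hxs
    simpa only [← hxs] using hprox (xs - gradient f xs)
  have htaylor := (convex_ball xbar ε₀).norm_image_sub_sub_fderiv_le_of_lipschitz
    (fun z _ => hHess z) hLipC (Metric.mem_ball.mpr (by linarith [dist_nonneg (x := xk) (y := xbar)]))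
    (y := xs) (Metric.mem_ball.mpr (by linarith [dist_triangle xs xk xbar, dist_comm xk xs]))
  exact norm_sub_le_of_isMinOn_model hg
    (isSymmetric_of_hasFDerivAt_gradient (hf.differentiable (by norm_num)) (hHess xk)) hlam
    ((hHess xk).le_of_lip' hLH.le (Eventually.of_forall fun u => hlip u xk)) hLH.le hLC hμ₁ hμ₂
    hμ₂μ₁ (le_min zero_le_one (by positivity)) (min_le_left _ _) hη hH hfix hmin htaylor herr

/-- Bound on the inexact step length `‖x̂_k − x_k‖` in terms of `dist(x_k, S*)`. -/
theorem stmt12 {n : ℕ}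
    (f g : EuclideanSpace ℝ (Fin n) → ℝ)
    (hf : ContDiff ℝ 2 f)
    (LH : ℝ) (hLH : 0 < LH)
    (hlip : ∀ u v, ‖gradient f u - gradient f v‖ ≤ LH * ‖u - v‖)
    (hg : ConvexOn ℝ Set.univ g) (hgc : Continuous g)
    (proxg : EuclideanSpace ℝ (Fin n) → EuclideanSpace ℝ (Fin n))
    (hprox : ∀ y, IsMinOn (fun u => g u + (1 / 2) * ‖u - y‖ ^ 2) Set.univ (proxg y))
    (hproxU : ∀ y u, IsMinOn (fun u => g u + (1 / 2) * ‖u - y‖ ^ 2) Set.univ u → u = proxg y)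
    (G : EuclideanSpace ℝ (Fin n) → EuclideanSpace ℝ (Fin n))
    (hG : ∀ y, G y = y - proxg (y - gradient f y))
    (Hess : EuclideanSpace ℝ (Fin n) → (EuclideanSpace ℝ (Fin n) →L[ℝ] EuclideanSpace ℝ (Fin n)))
    (hHess : ∀ y, HasFDerivAt (gradient f) (Hess y) y)
    (xbar : EuclideanSpace ℝ (Fin n)) (hxbar : G xbar = 0)
    (ε₀ LC : ℝ) (hε₀ : 0 < ε₀) (hLC : 0 ≤ LC)
    (hLipC : ∀ u ∈ Metric.ball xbar ε₀, ∀ v ∈ Metric.ball xbar ε₀,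
        ‖Hess u - Hess v‖ ≤ LC * ‖u - v‖)
    (xk : EuclideanSpace ℝ (Fin n)) (hxk : xk ∈ Metric.ball xbar (ε₀ / 2))
    (c μ₁ μ₂ δ : ℝ)
    (hμ₁ : μ₁ ∈ Set.Ioc (0 : ℝ) 1) (hμ₂ : μ₂ ∈ Set.Ioc (0 : ℝ) μ₁)
    (hδ : δ ∈ Set.Icc (0 : ℝ) 1)
    (hc : c > μ₂ * (1 + 2 * LH + μ₁) / (2 - μ₂))
    (lam : ℝ) (hlam : IsGreatest {t : ℝ | ∀ v, t * ‖v‖ ^ 2 ≤ ⟪v, Hess xk v⟫} lam)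
    (H : EuclideanSpace ℝ (Fin n) →L[ℝ] EuclideanSpace ℝ (Fin n))
    (hH : H = Hess xk + (max (-lam) 0 + c + μ₁ * min 1 (‖G xk‖ ^ δ))
        • ContinuousLinearMap.id ℝ (EuclideanSpace ℝ (Fin n)))
    (εk xhat : EuclideanSpace ℝ (Fin n))
    (hmin : IsMinOn (fun y => f xk + ⟪gradient f xk, y - xk⟫ + g y
        + (1 / 2) * ⟪y - xk, H (y - xk)⟫ + ⟪εk, y - xk⟫) Set.univ xhat)
    (herr : ‖εk‖ ≤ (μ₂ / 2) * min 1 (‖G xk‖ ^ δ) * ‖xhat - xk‖) :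
    0 < 2 * c - μ₂ * (c + 1 + μ₁ + 2 * LH) ∧
    ‖xhat - xk‖ ≤ (LC / (2 * c - μ₂ * (c + 1 + μ₁ + 2 * LH)))
          * Metric.infDist xk {y : EuclideanSpace ℝ (Fin n) | G y = 0} ^ 2
      + (2 * (LH + 2 * c + μ₁) / (2 * c - μ₂ * (c + 1 + μ₁ + 2 * LH)))
          * Metric.infDist xk {y : EuclideanSpace ℝ (Fin n) | G y = 0} :=
  stmt12_general f g hf LH hLH hlip hg proxg hprox G hG Hess hHess xbar hxbar ε₀ LC hLC hLipC xk hxk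
    c μ₁ μ₂ δ hμ₁ hμ₂ hc lam hlam H hH εk xhat hmin herr
end

section
/- Let x_k ∈ ℝⁿ, let Ĥ_k = B_k + (L_H + c + μ₁·min{1, ‖G(x_k)‖^δ})·I where B_k is symmetric positive semidefinite, c > 0, μ₁ ∈ (0,1], μ₂ ∈ (0, μ₁], δ ∈ [0,1], and let x_{k+1} be the minimizer of x ↦ f(x_k) + ⟨∇f(x_k), x − x_k⟩ + g(x) + (1/2)⟨x − x_k, Ĥ_k(x − x_k)⟩ + ⟨ε_k, x − x_k⟩ with ‖ε_k‖ ≤ (μ₂/2)·min{1, ‖G(x_k)‖^δ}·‖x_{k+1} − x_k‖. Then φ(x_k) − φ(x_{k+1}) ≥ (1/2)·(c + (μ₁ − μ₂)·min{1, ‖G(x_k)‖^δ})·‖x_{k+1} − x_k‖²; in particular φ(x_k) − φ(x_{k+1}) ≥ (c/2)·‖x_{k+1} − x_k‖². -/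
/-!
By the descent lemma, `f x' ≤ f x + ⟪∇f x, x' - x⟫ + (L_H/2)‖x' - x‖²`. Comparing the model value
at its minimizer `x'` with its value at `x` then leaves `φ x - φ x'` bounded below by
`½⟪s, H s⟫ + ⟪ε, s⟫ - (L_H/2)‖s‖²`, `s = x' - x`; the regularization `L_H + c + μ₁ m` in `H`
(with `m = min 1 ‖G x‖^δ` and `B ⪰ 0`) absorbs the curvature term, and the inexactness
`‖ε‖ ≤ (μ₂/2) m ‖s‖` costs at most `(μ₂/2) m ‖s‖²`.
-/

open scoped RealInnerProductSpace

section

variable {E : Type*} [NormedAddCommGroup E] [InnerProductSpace ℝ E]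

theorem neg_mul_sq_le_inner_of_norm_le {ε s : E} {a : ℝ} (hε : ‖ε‖ ≤ a * ‖s‖) :
    -(a * ‖s‖ ^ 2) ≤ ⟪ε, s⟫ := by
  have hCS : -(‖ε‖ * ‖s‖) ≤ ⟪ε, s⟫ := neg_le_of_abs_le (abs_real_inner_le_norm ε s)
  nlinarith [norm_nonneg s]

theorem mul_sq_norm_le_inner_add_smul_id {B : E →L[ℝ] E} (hB : ∀ v, 0 ≤ ⟪v, B v⟫) (r : ℝ) (s : E) :
    r * ‖s‖ ^ 2 ≤ ⟪s, (B + r • ContinuousLinearMap.id ℝ E) s⟫ := by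
  rw [add_apply, inner_add_right, smul_apply,
    ContinuousLinearMap.id_apply, real_inner_smul_right, real_inner_self_eq_norm_sq]
  linarith [hB s]

variable [CompleteSpace E]

theorem hasDerivAt_apply_add_smul_of_differentiable {f : E → ℝ} (hf : Differentiable ℝ f) (x s : E) (t : ℝ) :
    HasDerivAt (fun t : ℝ => f (x + t • s)) ⟪gradient f (x + t • s), s⟫ t := by
  have hline : HasDerivAt (fun t : ℝ => x + t • s) s t := by
    simpa using ((hasDerivAt_id t).smul_const s).const_add x
  have := (hf (x + t • s)).hasGradientAt.hasFDerivAt.comp_hasDerivAt t hline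
  rwa [InnerProductSpace.toDual_apply_apply] at this

theorem le_add_inner_gradient_add_half_mul_sq_of_lipschitz {f : E → ℝ} (hf : Differentiable ℝ f)
    {L : ℝ} (hL : ∀ u v, ‖gradient f u - gradient f v‖ ≤ L * ‖u - v‖) (x y : E) :
    f y ≤ f x + ⟪gradient f x, y - x⟫ + L / 2 * ‖y - x‖ ^ 2 := by
  set s := y - x
  -- The gap between the quadratic upper model and `f` along the segment only grows.
  let φ : ℝ → ℝ := fun t => f (x + t • s) - t * ⟪gradient f x, s⟫ - L / 2 * t ^ 2 * ‖s‖ ^ 2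
  have hφ' : ∀ t, HasDerivAt φ
      (⟪gradient f (x + t • s), s⟫ - ⟪gradient f x, s⟫ - L * t * ‖s‖ ^ 2) t := by
    intro t
    have := ((hasDerivAt_apply_add_smul_of_differentiable hf x s t).sub
      ((hasDerivAt_id t).mul_const ⟪gradient f x, s⟫)).sub
      (((hasDerivAt_pow 2 t).const_mul (L / 2)).mul_const (‖s‖ ^ 2))
    exact this.congr_deriv (by push_cast; ring)
  have hanti : AntitoneOn φ (Set.Icc 0 1) := by
    refine antitoneOn_of_hasDerivWithinAt_nonpos (convex_Icc 0 1)
      (fun t _ => (hφ' t).continuousAt.continuousWithinAt) (fun t _ => (hφ' t).hasDerivWithinAt) ?_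
    intro t ht
    rw [interior_Icc] at ht
    have hgrad : ⟪gradient f (x + t • s) - gradient f x, s⟫ ≤ L * t * ‖s‖ ^ 2 :=
      calc ⟪gradient f (x + t • s) - gradient f x, s⟫
          ≤ ‖gradient f (x + t • s) - gradient f x‖ * ‖s‖ := real_inner_le_norm _ _
        _ ≤ L * ‖(x + t • s) - x‖ * ‖s‖ := by gcongr; exact hL _ _
        _ = L * t * ‖s‖ ^ 2 := by
          rw [add_sub_cancel_left, norm_smul, Real.norm_of_nonneg ht.1.le]; ring
    rw [inner_sub_left] at hgrad
    linarith
  have hend : φ 1 ≤ φ 0 := hanti (by simp) (by simp) zero_le_one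
  simp only [φ, zero_smul, add_zero, one_smul, s, add_sub_cancel] at hend
  linarith

noncomputable def proxNewtonModel (f g : E → ℝ) (H : E →L[ℝ] E) (ε x y : E) : ℝ :=
  f x + ⟪gradient f x, y - x⟫ + g y + (1 / 2) * ⟪y - x, H (y - x)⟫ + ⟪ε, y - x⟫

theorem le_sub_of_isMinOn_proxNewtonModel {f g : E → ℝ} (hf : Differentiable ℝ f) {L : ℝ}
    (hL : ∀ u v, ‖gradient f u - gradient f v‖ ≤ L * ‖u - v‖) {H : E →L[ℝ] E} {ε x x' : E}
    (hmin : IsMinOn (proxNewtonModel f g H ε x) Set.univ x') :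
    (1 / 2) * ⟪x' - x, H (x' - x)⟫ + ⟪ε, x' - x⟫ - L / 2 * ‖x' - x‖ ^ 2
      ≤ (f x + g x) - (f x' + g x') := by
  have hx : proxNewtonModel f g H ε x x' ≤ proxNewtonModel f g H ε x x := hmin (Set.mem_univ x)
  simp only [proxNewtonModel, sub_self, inner_zero_right, map_zero, mul_zero, add_zero] at hx
  linarith [le_add_inner_gradient_add_half_mul_sq_of_lipschitz hf hL x x']

end

theorem stmt17_general {n : ℕ}
    (f g : EuclideanSpace ℝ (Fin n) → ℝ)
    (hf : ContDiff ℝ 2 f)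
    (LH : ℝ)
    (hlip : ∀ u v, ‖gradient f u - gradient f v‖ ≤ LH * ‖u - v‖)
    (G : EuclideanSpace ℝ (Fin n) → EuclideanSpace ℝ (Fin n))
    (xk : EuclideanSpace ℝ (Fin n)) (B : EuclideanSpace ℝ (Fin n) →L[ℝ] EuclideanSpace ℝ (Fin n))
    (hBpsd : ∀ v, 0 ≤ ⟪v, B v⟫)
    (c μ₁ μ₂ δ : ℝ)
    (hμ₂ : μ₂ ∈ Set.Ioc (0 : ℝ) μ₁)
    (H : EuclideanSpace ℝ (Fin n) →L[ℝ] EuclideanSpace ℝ (Fin n))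
    (hH : H = B + (LH + c + μ₁ * min 1 (‖G xk‖ ^ δ)) • ContinuousLinearMap.id ℝ (EuclideanSpace ℝ (Fin n)))
    (εk xk1 : EuclideanSpace ℝ (Fin n))
    (hmin : IsMinOn (fun y => f xk + ⟪gradient f xk, y - xk⟫ + g y
        + (1 / 2) * ⟪y - xk, H (y - xk)⟫ + ⟪εk, y - xk⟫) Set.univ xk1)
    (herr : ‖εk‖ ≤ (μ₂ / 2) * min 1 (‖G xk‖ ^ δ) * ‖xk1 - xk‖) :
    (f xk + g xk) - (f xk1 + g xk1)
        ≥ (1 / 2) * (c + (μ₁ - μ₂) * min 1 (‖G xk‖ ^ δ)) * ‖xk1 - xk‖ ^ 2 ∧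
    (f xk + g xk) - (f xk1 + g xk1) ≥ (c / 2) * ‖xk1 - xk‖ ^ 2 := by
  set m := min 1 (‖G xk‖ ^ δ)
  set s := xk1 - xk
  have hm : 0 ≤ m := le_min zero_le_one (Real.rpow_nonneg (norm_nonneg _) δ)
  have hdecr := le_sub_of_isMinOn_proxNewtonModel (hf.differentiable (by norm_num)) hlip hmin
  have hHs : (LH + c + μ₁ * m) * ‖s‖ ^ 2 ≤ ⟪s, H s⟫ :=
    hH ▸ mul_sq_norm_le_inner_add_smul_id hBpsd _ s
  have hεs : -(μ₂ / 2 * m * ‖s‖ ^ 2) ≤ ⟪εk, s⟫ := neg_mul_sq_le_inner_of_norm_le herr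
  have hmain : (1 / 2) * (c + (μ₁ - μ₂) * m) * ‖s‖ ^ 2 ≤ (f xk + g xk) - (f xk1 + g xk1) := by
    linarith
  refine ⟨hmain, le_trans ?_ hmain⟩
  have hμ : 0 ≤ (μ₁ - μ₂) * m * ‖s‖ ^ 2 := by
    have := sub_nonneg.2 hμ₂.2
    positivity
  linarith

/-- Algorithm 2 (no line search): sufficient decrease
`φ(x_k) − φ(x_{k+1}) ≥ (1/2)(c + (μ₁ − μ₂)min{1, ‖G(x_k)‖^δ})‖x_{k+1} − x_k‖²`,
in particular `φ(x_k) − φ(x_{k+1}) ≥ (c/2)‖x_{k+1} − x_k‖²`. -/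
theorem stmt17 {n : ℕ}
    (f g : EuclideanSpace ℝ (Fin n) → ℝ)
    (hf : ContDiff ℝ 2 f)
    (LH : ℝ) (hLH : 0 < LH)
    (hlip : ∀ u v, ‖gradient f u - gradient f v‖ ≤ LH * ‖u - v‖)
    (hg : ConvexOn ℝ Set.univ g) (hgc : Continuous g)
    (proxg : EuclideanSpace ℝ (Fin n) → EuclideanSpace ℝ (Fin n))
    (hprox : ∀ y, IsMinOn (fun u => g u + (1 / 2) * ‖u - y‖ ^ 2) Set.univ (proxg y))
    (hproxU : ∀ y u, IsMinOn (fun u => g u + (1 / 2) * ‖u - y‖ ^ 2) Set.univ u → u = proxg y)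
    (G : EuclideanSpace ℝ (Fin n) → EuclideanSpace ℝ (Fin n))
    (hG : ∀ y, G y = y - proxg (y - gradient f y))
    (xk : EuclideanSpace ℝ (Fin n)) (B : EuclideanSpace ℝ (Fin n) →L[ℝ] EuclideanSpace ℝ (Fin n))
    (hBsym : ∀ u v, ⟪B u, v⟫ = ⟪u, B v⟫)
    (hBpsd : ∀ v, 0 ≤ ⟪v, B v⟫)
    (c μ₁ μ₂ δ : ℝ) (hc : 0 < c)
    (hμ₁ : μ₁ ∈ Set.Ioc (0 : ℝ) 1) (hμ₂ : μ₂ ∈ Set.Ioc (0 : ℝ) μ₁)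
    (hδ : δ ∈ Set.Icc (0 : ℝ) 1)
    (H : EuclideanSpace ℝ (Fin n) →L[ℝ] EuclideanSpace ℝ (Fin n))
    (hH : H = B + (LH + c + μ₁ * min 1 (‖G xk‖ ^ δ)) • ContinuousLinearMap.id ℝ (EuclideanSpace ℝ (Fin n)))
    (εk xk1 : EuclideanSpace ℝ (Fin n))
    (hmin : IsMinOn (fun y => f xk + ⟪gradient f xk, y - xk⟫ + g y
        + (1 / 2) * ⟪y - xk, H (y - xk)⟫ + ⟪εk, y - xk⟫) Set.univ xk1)
    (herr : ‖εk‖ ≤ (μ₂ / 2) * min 1 (‖G xk‖ ^ δ) * ‖xk1 - xk‖) :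
    (f xk + g xk) - (f xk1 + g xk1)
        ≥ (1 / 2) * (c + (μ₁ - μ₂) * min 1 (‖G xk‖ ^ δ)) * ‖xk1 - xk‖ ^ 2 ∧
    (f xk + g xk) - (f xk1 + g xk1) ≥ (c / 2) * ‖xk1 - xk‖ ^ 2 :=
  stmt17_general f g hf LH hlip G xk B hBpsd c μ₁ μ₂ δ hμ₂ H hH εk xk1 hmin herr
end
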